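/- If a d-dimensional shift of finite type has infinitely many maximal subsystems, then it is not an isolated point of the space S^d. -/
import Mathlib


/-- The group `ℤ^d`. -/
abbrev ZD (d : ℕ) := Fin d → ℤ

/-- A configuration is a map `ℤ^d → ℤ`. -/
abbrev Config (d : ℕ) := ZD d → ℤ

/-- The shift map `σ^u`, defined by `σ^u(x)_v = x_{u+v}`. -/
def shiftMap {d : ℕ} (u : ZD d) (x : Config d) : Config d := fun v => x (u + v)

/-- The sup norm `‖·‖_∞` on `ℤ^d`, valued in `ℕ`. -/
def normInf {d : ℕ} (n : ZD d) : ℕ := Finset.univ.sup fun i => (n i).natAbs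

open Classical in
/-- The metric `δ` on configurations: `δ(x,y) = 2^{-min{‖n‖_∞ : x_n ≠ y_n}}`, `δ(x,x) = 0`. -/
noncomputable def deltaDist {d : ℕ} (x y : Config d) : ℝ :=
  if x = y then 0
  else (2 : ℝ) ^ (-((sInf {m : ℕ | ∃ n : ZD d, normInf n = m ∧ x n ≠ y n} : ℕ) : ℤ))

/-- The closure of a set of configurations with respect to the metric `δ`. -/
def deltaClosure {d : ℕ} (A : Set (Config d)) : Set (Config d) :=
  {x | ∀ ε : ℝ, 0 < ε → ∃ a ∈ A, deltaDist x a < ε}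

/-- A set of configurations is closed for `δ` when it contains all its limit points. -/
def IsDeltaClosed {d : ℕ} (A : Set (Config d)) : Prop := deltaClosure A ⊆ A

/-- A `d`-dimensional shift: a nonempty set of configurations over a common finite
alphabet, closed for `δ` and invariant under every shift map. -/
def IsShift {d : ℕ} (X : Set (Config d)) : Prop :=
  X.Nonempty ∧ (∃ A : Finset ℤ, ∀ x ∈ X, ∀ v : ZD d, x v ∈ A) ∧ IsDeltaClosed X ∧
    ∀ u : ZD d, ∀ x ∈ X, shiftMap u x ∈ X

/-- The Hausdorff metric `δ_H` on the space of shifts. -/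
noncomputable def deltaH {d : ℕ} (X Z : Set (Config d)) : ℝ :=
  max (⨆ x : X, ⨅ z : Z, deltaDist (x : Config d) (z : Config d))
      (⨆ z : Z, ⨅ x : X, deltaDist (x : Config d) (z : Config d))

/-- A subsystem of a shift `X`: a nonempty closed shift-invariant subset of `X`. -/
def IsSubsystem {d : ℕ} (Z X : Set (Config d)) : Prop :=
  Z.Nonempty ∧ Z ⊆ X ∧ IsDeltaClosed Z ∧ ∀ u : ZD d, ∀ z ∈ Z, shiftMap u z ∈ Z

/-- A maximal subsystem of `X`: a proper subsystem such that any subsystem strictly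
between it and `X` equals `X`. -/
def IsMaximalSubsystem {d : ℕ} (Z X : Set (Config d)) : Prop :=
  IsSubsystem Z X ∧ Z ≠ X ∧ ∀ Z', IsSubsystem Z' X → Z ⊂ Z' → Z' = X

/-- An outcast of `X`: a proper subsystem contained in no maximal subsystem of `X`. -/
def IsOutcast {d : ℕ} (Z X : Set (Config d)) : Prop :=
  IsSubsystem Z X ∧ Z ≠ X ∧ ∀ M, IsMaximalSubsystem M X → ¬ Z ⊆ M

/-- A pattern with finite support `U` (given by the values of `p` on `U`) appears in the
configuration `x`. -/
def PatternAppears {d : ℕ} (U : Finset (ZD d)) (p : ZD d → ℤ) (x : Config d) : Prop :=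
  ∃ u : ZD d, ∀ v ∈ U, x (u + v) = p v

/-- The set of configurations over the alphabet `A` avoiding every pattern in `F`. -/
def XofF {d : ℕ} (A : Finset ℤ) (F : Set (Finset (ZD d) × (ZD d → ℤ))) : Set (Config d) :=
  {x | (∀ v : ZD d, x v ∈ A) ∧ ∀ q ∈ F, ¬ PatternAppears q.1 q.2 x}

/-- A shift of finite type: defined by a finite alphabet and a finite set of forbidden
patterns. -/
def IsSFT {d : ℕ} (X : Set (Config d)) : Prop :=
  ∃ (A : Finset ℤ) (F : Finset (Finset (ZD d) × (ZD d → ℤ))), X = XofF A (F : Set _)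

/-- `X` is an isolated point of the subspace `S` (with the Hausdorff metric `δ_H`). -/
def IsolatedIn {d : ℕ} (S : Set (Set (Config d))) (X : Set (Config d)) : Prop :=
  X ∈ S ∧ ∃ ε : ℝ, 0 < ε ∧ ∀ Z ∈ S, deltaH X Z < ε → Z = X

/-- The orbit of a configuration under the shift action. -/
def orbit {d : ℕ} (x : Config d) : Set (Config d) := {y | ∃ u : ZD d, y = shiftMap u x}

/-- A shift is transitive when some point has dense orbit. -/
def IsTransitive {d : ℕ} (X : Set (Config d)) : Prop :=
  IsShift X ∧ ∃ x ∈ X, X ⊆ deltaClosure (orbit x)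

/-- A shift is minimal when its only subsystem is itself. -/
def IsMinimalShift {d : ℕ} (X : Set (Config d)) : Prop :=
  IsShift X ∧ ∀ Z, IsSubsystem Z X → Z = X


lemma deltaDist_self {d : ℕ} (x : Config d) : deltaDist x x = 0 := by
  simp [deltaDist]

lemma deltaDist_nonneg {d : ℕ} (x y : Config d) : 0 ≤ deltaDist x y := by
  unfold deltaDist
  split
  · exact le_refl 0
  · positivity

lemma deltaDist_le_of_agree {d : ℕ} (m : ℕ) (x y : Config d)
    (h : ∀ n : ZD d, normInf n ≤ m → x n = y n) :
    deltaDist x y ≤ (2 : ℝ) ^ (-((m + 1 : ℕ) : ℤ)) := by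
  unfold deltaDist
  split
  · positivity
  · rename_i hxy
    set S := {k : ℕ | ∃ n : ZD d, normInf n = k ∧ x n ≠ y n} with hS
    have hne : S.Nonempty := by
      obtain ⟨n, hn⟩ := Function.ne_iff.mp hxy
      exact ⟨normInf n, n, rfl, hn⟩
    obtain ⟨n, hn, hne'⟩ := Nat.sInf_mem hne
    have hge : m + 1 ≤ sInf S := by
      by_contra hc
      push_neg at hc
      exact hne' (h n (by omega))
    apply zpow_le_zpow_right₀ one_le_two
    omega

lemma IsDeltaClosed.union' {d : ℕ} {M N : Set (Config d)}
    (hM : IsDeltaClosed M) (hN : IsDeltaClosed N) : IsDeltaClosed (M ∪ N) := by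
  intro x hx
  by_contra hcon
  have hxM : x ∉ M := fun h => hcon (Or.inl h)
  have hxN : x ∉ N := fun h => hcon (Or.inr h)
  have h1 : x ∉ deltaClosure M := fun h => hxM (hM h)
  have h2 : x ∉ deltaClosure N := fun h => hxN (hN h)
  simp only [deltaClosure, Set.mem_setOf_eq, not_forall] at h1 h2
  obtain ⟨ε₁, hε₁, h1⟩ := h1
  obtain ⟨ε₂, hε₂, h2⟩ := h2
  push_neg at h1 h2
  obtain ⟨a, ha, hda⟩ := hx (min ε₁ ε₂) (lt_min hε₁ hε₂)
  rcases ha with ha | ha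
  · exact absurd hda (not_lt.mpr (le_trans (min_le_left _ _) (h1 a ha)))
  · exact absurd hda (not_lt.mpr (le_trans (min_le_right _ _) (h2 a ha)))

lemma maximal_union {d : ℕ} {X M N : Set (Config d)}
    (hM : IsMaximalSubsystem M X) (hN : IsMaximalSubsystem N X) (hMN : M ≠ N) :
    M ∪ N = X := by
  have hNM : ¬ N ⊆ M := by
    intro h
    exact hM.2.1 (hN.2.2 M hM.1 (Set.ssubset_iff_subset_ne.mpr ⟨h, hMN.symm⟩))
  obtain ⟨y, hyN, hyM⟩ := Set.not_subset.mp hNM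
  have hUsub : IsSubsystem (M ∪ N) X := by
    refine ⟨hM.1.1.inl, Set.union_subset hM.1.2.1 hN.1.2.1,
      IsDeltaClosed.union' hM.1.2.2.1 hN.1.2.2.1, ?_⟩
    rintro u z (hz | hz)
    · exact Or.inl (hM.1.2.2.2 u z hz)
    · exact Or.inr (hN.1.2.2.2 u z hz)
  refine hM.2.2 (M ∪ N) hUsub (Set.ssubset_iff_subset_ne.mpr ⟨Set.subset_union_left, ?_⟩)
  intro h
  exact hyM (h ▸ Set.mem_union_right M hyN)

/-- A `d`-dimensional shift of finite type with infinitely many maximal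
subsystems is not an isolated point of `S^d`. -/
theorem SFT_infinitely_many_maximal_not_isolated
    (d : ℕ) (hd : 1 ≤ d) (X : Set (Config d)) (hX : IsShift X) (hsft : IsSFT X)
    (hinf : {Z : Set (Config d) | IsMaximalSubsystem Z X}.Infinite) :
    ¬ IsolatedIn {Y : Set (Config d) | IsShift Y} X := by
  rintro ⟨hXS, ε, hε, hiso⟩
  -- choose m with 2^{-m} < ε
  obtain ⟨m, hm⟩ : ∃ m : ℕ, (2 : ℝ) ^ (-(m : ℤ)) < ε := by
    obtain ⟨m, hm⟩ := exists_pow_lt_of_lt_one hε (by norm_num : (1 : ℝ) / 2 < 1)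
    refine ⟨m, ?_⟩
    have : ((1 : ℝ) / 2) ^ m = (2 : ℝ) ^ (-(m : ℤ)) := by
      rw [zpow_neg, zpow_natCast, one_div, inv_pow]
    linarith [hm, this ▸ hm]
  obtain ⟨A, hA⟩ := hX.2.1
  set B : Finset (ZD d) := Fintype.piFinset (fun _ => Finset.Icc (-(m : ℤ)) (m : ℤ)) with hB
  set ρ : Config d → (↥B → ℤ) := fun x v => x v with hρ
  have hTfin : (ρ '' X).Finite := by
    apply Set.Finite.subset (Set.Finite.pi (fun _ : ↥B => A.finite_toSet))
    rintro f ⟨x, hx, rfl⟩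
    intro v _
    exact hA x hx v
  set g : Config d → Config d := fun x => Function.invFunOn ρ X (ρ x) with hg
  have hgX : ∀ x ∈ X, g x ∈ X := fun x hx => Function.invFunOn_apply_mem hx
  have hgρ : ∀ x ∈ X, ρ (g x) = ρ x := fun x hx => Function.invFunOn_apply_eq hx
  have hRfin : (g '' X).Finite := by
    have heq : g '' X = Function.invFunOn ρ X '' (ρ '' X) := by
      rw [Set.image_image]
    rw [heq]
    exact hTfin.image _
  have hRX : g '' X ⊆ X := by
    rintro _ ⟨x, hx, rfl⟩
    exact hgX x hx
  -- each point of X excludes at most one maximal subsystem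
  have hsub : ∀ y ∈ X, {M | IsMaximalSubsystem M X ∧ y ∉ M}.Subsingleton := by
    intro y hy M hM N hN
    by_contra hMN
    have := maximal_union hM.1 hN.1 hMN
    have : y ∈ M ∪ N := this ▸ hy
    rcases this with h | h
    · exact hM.2 h
    · exact hN.2 h
  have hBadfin : (⋃ y ∈ g '' X, {M | IsMaximalSubsystem M X ∧ y ∉ M}).Finite :=
    Set.Finite.biUnion hRfin (fun y hy => ((hsub y (hRX hy)).finite))
  obtain ⟨M, hMmem⟩ := (hinf.diff hBadfin).nonempty
  obtain ⟨hMmax, hMBad⟩ := hMmem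
  simp only [Set.mem_setOf_eq] at hMmax
  have hRM : ∀ x ∈ X, g x ∈ M := by
    intro x hx
    by_contra h
    exact hMBad (Set.mem_biUnion ⟨x, hx, rfl⟩ ⟨hMmax, h⟩)
  have hagree : ∀ x ∈ X, ∀ n : ZD d, normInf n ≤ m → x n = g x n := by
    intro x hx n hn
    have hnB : n ∈ B := by
      simp only [hB, Fintype.mem_piFinset, Finset.mem_Icc]
      intro i
      have h1 : (n i).natAbs ≤ normInf n :=
        Finset.le_sup (f := fun i => (n i).natAbs) (Finset.mem_univ i)
      have : (n i).natAbs ≤ m := le_trans h1 hn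
      omega
    have := congrFun (hgρ x hx) ⟨n, hnB⟩
    exact this.symm
  have hMsub : IsSubsystem M X := hMmax.1
  have hMshift : IsShift M :=
    ⟨hMsub.1, ⟨A, fun x hx v => hA x (hMsub.2.1 hx) v⟩, hMsub.2.2.1, hMsub.2.2.2⟩
  haveI hXne : Nonempty ↥X := hX.1.to_subtype
  haveI hMne : Nonempty ↥M := hMsub.1.to_subtype
  have hbdd : ∀ z : Config d, BddBelow (Set.range fun x : ↥X => deltaDist (x : Config d) z) :=
    fun z => ⟨0, by rintro r ⟨i, rfl⟩; exact deltaDist_nonneg _ _⟩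
  have hbdd' : ∀ x : Config d, BddBelow (Set.range fun z : ↥M => deltaDist x (z : Config d)) :=
    fun x => ⟨0, by rintro r ⟨i, rfl⟩; exact deltaDist_nonneg _ _⟩
  have hexp : (2 : ℝ) ^ (-((m + 1 : ℕ) : ℤ)) < ε := by
    refine lt_trans ?_ hm
    apply zpow_lt_zpow_right₀ (by norm_num : (1:ℝ) < 2)
    omega
  have hδ : deltaH X M < ε := by
    rw [deltaH]
    apply max_lt
    · refine lt_of_le_of_lt (ciSup_le ?_) hexp
      rintro ⟨x, hx⟩
      have h1 : deltaDist x (g x) ≤ (2 : ℝ) ^ (-((m + 1 : ℕ) : ℤ)) :=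
        deltaDist_le_of_agree m x (g x) (hagree x hx)
      exact le_trans (ciInf_le (hbdd' x) ⟨g x, hRM x hx⟩) h1
    · refine lt_of_le_of_lt (ciSup_le ?_) hexp
      rintro ⟨z, hz⟩
      have hzX : z ∈ X := hMsub.2.1 hz
      have : (⨅ x : ↥X, deltaDist (x : Config d) z) ≤ deltaDist z z :=
        ciInf_le (hbdd z) ⟨z, hzX⟩
      rw [deltaDist_self] at this
      exact le_trans this (by positivity)
  exact hMmax.2.1 (hiso M hMshift hδ)
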